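/- Fix k ≥ 1 and let G be the graph of the Boolean-width separation construction. Then every branch decomposition of V(G) has an edge displaying a bipartition (L,R) of V(G) such that |{N_G(X) ∩ R : X ⊆ L}| ≥ 2^{k(k−3)/6} or |{N_G(X) ∩ L : X ⊆ R}| ≥ 2^{k(k−3)/6} (with 2^{k(k−3)/6} interpreted as a real number). In particular, the Boolean-width of G is at least k(k−3)/6. -/

import Mathlib

/-- `𝒮 = {s ⊆ [2k] : |s ∩ [k]| = 1}`. -/
abbrev SS (k : ℕ) : Finset (Finset ℕ) :=
  (Finset.Icc 1 (2 * k)).powerset.filter fun s => (s ∩ Finset.Icc 1 k).card = 1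

/-- The powerset of `[2k]`. -/
abbrev PP (k : ℕ) : Finset (Finset ℕ) := (Finset.Icc 1 (2 * k)).powerset

/-- Vertices of the Boolean-width separation construction: `a_s` for `s ∈ 𝒮` and
`b^j_t` for `j ∈ [k²]`, `t ⊆ [2k]`. -/
abbrev BWVertex (k : ℕ) : Type := ↥(SS k) ⊕ (Fin (k * k) × ↥(PP k))

/-- The adjacency-generating relation of the construction: each class
`{a_s : s ∩ [k] = {i}}` is a clique, each `B_j = {b^j_t : t ⊆ [2k]}` is a clique, and
`a_s ∼ b^j_t` iff `|s ∩ t|` is odd. -/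
def bwRel (k : ℕ) : BWVertex k → BWVertex k → Prop
  | Sum.inl s, Sum.inl s' => s.val ∩ Finset.Icc 1 k = s'.val ∩ Finset.Icc 1 k
  | Sum.inr (j, _), Sum.inr (j', _) => j = j'
  | Sum.inl s, Sum.inr (_, t) => Odd (s.val ∩ t.val).card
  | _, _ => False

/-- The graph of the Boolean-width separation construction. -/
def BWGraph (k : ℕ) : SimpleGraph (BWVertex k) := SimpleGraph.fromRel (bwRel k)

/-- `N_G(X)`: the set of vertices outside `X` adjacent to some vertex of `X`. -/
def nbhdSet {W : Type*} (G : SimpleGraph W) (X : Set W) : Set W :=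
  {y | y ∉ X ∧ ∃ x ∈ X, G.Adj x y}


namespace BWProof

set_option linter.unusedSectionVars false

variable {V : Type*} [DecidableEq V] {T : SimpleGraph V}

open SimpleGraph

variable {V : Type*} [DecidableEq V] {T : SimpleGraph V}

lemma reach_aux {u w : V} {z c : V} (p : T.Walk z c) :
    (T.deleteEdges {s(u, w)}).Reachable z c ∨ (T.deleteEdges {s(u, w)}).Reachable z u ∨
      (T.deleteEdges {s(u, w)}).Reachable z w := by
  induction p with
  | nil => exact Or.inl (Reachable.refl _)
  | @cons a b c h q ih =>
    by_cases he : s(a, b) = s(u, w)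
    · rw [Sym2.eq_iff] at he
      rcases he with ⟨rfl, rfl⟩ | ⟨rfl, rfl⟩
      · exact Or.inr (Or.inl (Reachable.refl _))
      · exact Or.inr (Or.inr (Reachable.refl _))
    · have hadj : (T.deleteEdges {s(u, w)}).Adj a b := by simp [h, he]
      rcases ih with h1 | h1 | h1
      · exact Or.inl (hadj.reachable.trans h1)
      · exact Or.inr (Or.inl (hadj.reachable.trans h1))
      · exact Or.inr (Or.inr (hadj.reachable.trans h1))

/-- Every vertex reaches `u` or `w` after deleting edge `uw`, in a connected graph. -/
lemma reach_or (hT : T.Connected) (u w z : V) :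
    (T.deleteEdges {s(u, w)}).Reachable z u ∨ (T.deleteEdges {s(u, w)}).Reachable z w := by
  obtain ⟨p⟩ := hT.preconnected z u
  rcases reach_aux (u := u) (w := w) p with h | h | h
  · exact Or.inl h
  · exact Or.inl h
  · exact Or.inr h

/-- In a tree, after deleting the edge `uw`, `u` and `w` are not reachable from each
other. -/
lemma not_reach (hT : T.IsTree) {u w : V} (h : T.Adj u w) :
    ¬ (T.deleteEdges {s(u, w)}).Reachable u w := by
  rintro ⟨p⟩
  have hb : p.bypass.IsPath := SimpleGraph.Walk.bypass_isPath p
  have hsub : ∀ e ∈ p.bypass.edges, e ∈ T.edgeSet := by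
    intro e he
    have := p.bypass.edges_subset_edgeSet he
    rw [edgeSet_deleteEdges] at this
    exact this.1
  have hqp : (p.bypass.transfer T hsub).IsPath := hb.transfer _
  have hepath : (SimpleGraph.Walk.cons h (SimpleGraph.Walk.nil)).IsPath := by
    simp [SimpleGraph.Walk.cons_isPath_iff, h.ne]
  have heq := hT.IsAcyclic.path_unique ⟨_, hqp⟩ ⟨_, hepath⟩
  have hval : p.bypass.transfer T hsub = SimpleGraph.Walk.cons h (SimpleGraph.Walk.nil) :=
    congrArg Subtype.val heq
  have hmem : s(u, w) ∈ (p.bypass.transfer T hsub).edges := by rw [hval]; simp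
  rw [SimpleGraph.Walk.edges_transfer] at hmem
  have := p.bypass.edges_subset_edgeSet hmem
  rw [edgeSet_deleteEdges] at this
  exact this.2 rfl

lemma not_reach_both (hT : T.IsTree) {u w z : V} (h : T.Adj u w)
    (h1 : (T.deleteEdges {s(u, w)}).Reachable z u)
    (h2 : (T.deleteEdges {s(u, w)}).Reachable z w) : False :=
  not_reach hT h (h1.symm.trans h2)

/-- A path to `x` in `T - wx` avoids `w`. -/
lemma path_avoids (hT : T.IsTree) {w x z : V} (hwx : T.Adj w x)
    (p : (T.deleteEdges {s(w, x)}).Walk z x) (hp : p.IsPath) : w ∉ p.support := by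
  intro hw
  have hq : (p.dropUntil w hw).IsPath := hp.dropUntil hw
  have hsub : ∀ e ∈ (p.dropUntil w hw).edges, e ∈ T.edgeSet := by
    intro e he
    have := (p.dropUntil w hw).edges_subset_edgeSet he
    rw [edgeSet_deleteEdges] at this
    exact this.1
  have hqt : ((p.dropUntil w hw).transfer T hsub).IsPath := hq.transfer _
  have hepath : (SimpleGraph.Walk.cons hwx (SimpleGraph.Walk.nil)).IsPath := by
    simp [SimpleGraph.Walk.cons_isPath_iff, hwx.ne]
  have heq := hT.IsAcyclic.path_unique ⟨_, hqt⟩ ⟨_, hepath⟩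
  have hval : (p.dropUntil w hw).transfer T hsub
      = SimpleGraph.Walk.cons hwx (SimpleGraph.Walk.nil) := congrArg Subtype.val heq
  have hmem : s(w, x) ∈ ((p.dropUntil w hw).transfer T hsub).edges := by rw [hval]; simp
  rw [SimpleGraph.Walk.edges_transfer] at hmem
  have := (p.dropUntil w hw).edges_subset_edgeSet hmem
  rw [edgeSet_deleteEdges] at this
  exact this.2 rfl

/-- Step-down: the `x`-side of the edge `wx` is contained in the `w`-side of `uw`,
minus `w`. -/
lemma side_step (hT : T.IsTree) {u w x z : V} (huw : T.Adj u w) (hwx : T.Adj w x)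
    (hxu : x ≠ u) (hz : (T.deleteEdges {s(w, x)}).Reachable z x) :
    (T.deleteEdges {s(u, w)}).Reachable z w ∧ z ≠ w := by
  obtain ⟨p0⟩ := hz
  have hp : p0.bypass.IsPath := p0.bypass_isPath
  have hw : w ∉ p0.bypass.support := path_avoids hT hwx p0.bypass hp
  have hsub : ∀ e ∈ p0.bypass.edges, e ∈ (T.deleteEdges {s(u, w)}).edgeSet := by
    intro e he
    have h1 := p0.bypass.edges_subset_edgeSet he
    rw [edgeSet_deleteEdges] at h1
    rw [edgeSet_deleteEdges]
    refine ⟨h1.1, ?_⟩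
    intro hcontra
    rw [Set.mem_singleton_iff] at hcontra
    subst hcontra
    exact hw (p0.bypass.snd_mem_support_of_mem_edges he)
  have hzx : (T.deleteEdges {s(u, w)}).Reachable z x := ⟨p0.bypass.transfer _ hsub⟩
  have hxw : (T.deleteEdges {s(u, w)}).Adj x w := by
    simp only [deleteEdges_adj]
    refine ⟨hwx.symm, ?_⟩
    simp only [Set.mem_singleton_iff, Sym2.eq_iff]
    rintro (⟨rfl, -⟩ | ⟨rfl, rfl⟩)
    · exact hxu rfl
    · exact huw.ne rfl
  refine ⟨hzx.trans hxw.reachable, ?_⟩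
  rintro rfl
  exact hw p0.bypass.start_mem_support

/-- Cover: a vertex on the `w`-side of `uw` other than `w` lies on the `x`-side of the
edge `wx` for some neighbor `x ≠ u` of `w`. -/
lemma side_cover (hT : T.IsTree) {u w z : V} (huw : T.Adj u w)
    (hz : (T.deleteEdges {s(u, w)}).Reachable z w) (hzw : z ≠ w) :
    ∃ x, T.Adj w x ∧ x ≠ u ∧ (T.deleteEdges {s(w, x)}).Reachable z x := by
  obtain ⟨p0⟩ := hz.symm
  have hp : p0.bypass.IsPath := p0.bypass_isPath
  generalize hgen : p0.bypass = p at hp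
  cases p with
  | nil => exact absurd rfl hzw.symm
  | @cons a b c h q =>
    rw [SimpleGraph.Walk.cons_isPath_iff] at hp
    obtain ⟨hqp, hwq⟩ := hp
    have hTadj : T.Adj w b := ((deleteEdges_adj).mp h).1
    have hbu : b ≠ u := by
      rintro rfl
      exact ((deleteEdges_adj).mp h).2 (by rw [Sym2.eq_swap]; rfl)
    refine ⟨b, hTadj, hbu, ?_⟩
    have hsub : ∀ e ∈ q.edges, e ∈ (T.deleteEdges {s(w, b)}).edgeSet := by
      intro e he
      have h1 := q.edges_subset_edgeSet he
      rw [edgeSet_deleteEdges] at h1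
      rw [edgeSet_deleteEdges]
      refine ⟨h1.1, ?_⟩
      intro hcontra
      rw [Set.mem_singleton_iff] at hcontra
      subst hcontra
      exact hwq (q.fst_mem_support_of_mem_edges he)
    exact (Reachable.symm ⟨q.transfer _ hsub⟩)

/-- Disjointness of two different neighbor-sides at the same vertex. -/
lemma side_disjoint (hT : T.IsTree) {w x y z : V} (hwx : T.Adj w x) (hwy : T.Adj w y)
    (hxy : x ≠ y) (h1 : (T.deleteEdges {s(w, x)}).Reachable z x)
    (h2 : (T.deleteEdges {s(w, y)}).Reachable z y) : False := by
  obtain ⟨p0⟩ := h1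
  obtain ⟨q0⟩ := h2
  have hpx : p0.bypass.IsPath := p0.bypass_isPath
  have hqy : q0.bypass.IsPath := q0.bypass_isPath
  have hwp : w ∉ p0.bypass.support := path_avoids hT hwx _ hpx
  have hwq : w ∉ q0.bypass.support := path_avoids hT hwy _ hqy
  have hsubp : ∀ e ∈ p0.bypass.edges, e ∈ T.edgeSet := fun e he => by
    have := p0.bypass.edges_subset_edgeSet he
    rw [edgeSet_deleteEdges] at this; exact this.1
  have hsubq : ∀ e ∈ q0.bypass.edges, e ∈ T.edgeSet := fun e he => by
    have := q0.bypass.edges_subset_edgeSet he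
    rw [edgeSet_deleteEdges] at this; exact this.1
  set P : T.Walk z x := p0.bypass.transfer T hsubp with hP
  set Q : T.Walk z y := q0.bypass.transfer T hsubq with hQ
  set W : T.Walk x y := P.reverse.append Q with hW
  have hwW : w ∉ W.support := by
    intro hw
    rw [hW, SimpleGraph.Walk.mem_support_append_iff] at hw
    rcases hw with hw | hw
    · rw [hP, SimpleGraph.Walk.support_reverse, List.mem_reverse,
        SimpleGraph.Walk.support_transfer] at hw
      exact hwp hw
    · rw [hQ, SimpleGraph.Walk.support_transfer] at hw
      exact hwq hw
  have hB : W.bypass.IsPath := W.bypass_isPath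
  have hwB : w ∉ W.bypass.support := fun hw => hwW (W.support_bypass_subset hw)
  have hepath : (SimpleGraph.Walk.cons hwx.symm (SimpleGraph.Walk.cons hwy
      (SimpleGraph.Walk.nil))).IsPath := by
    simp [SimpleGraph.Walk.cons_isPath_iff, hwy.ne, hxy, hwx.ne']
  have heq := hT.IsAcyclic.path_unique ⟨_, hB⟩ ⟨_, hepath⟩
  apply hwB
  have hval : W.bypass = (SimpleGraph.Walk.cons hwx.symm (SimpleGraph.Walk.cons hwy
      (SimpleGraph.Walk.nil))) := congrArg Subtype.val heq
  rw [hval]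
  simp

/-- A leaf's side is a singleton. -/
lemma side_leaf [Fintype V] [DecidableRel T.Adj] {u w z : V}
    (huw : T.Adj u w) (hdeg : T.degree w = 1)
    (hz : (T.deleteEdges {s(u, w)}).Reachable z w) : z = w := by
  obtain ⟨p0⟩ := hz.symm
  cases p0 with
  | nil => rfl
  | @cons a b c h q =>
    exfalso
    have hTadj : T.Adj w b := ((deleteEdges_adj).mp h).1
    have hne : s(w, b) ∉ ({s(u, w)} : Set (Sym2 V)) := ((deleteEdges_adj).mp h).2
    have hnb : T.neighborFinset w = {u} := by
      apply Finset.eq_singleton_iff_unique_mem.mpr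
      constructor
      · rw [SimpleGraph.mem_neighborFinset]; exact huw.symm
      · intro a ha
        rw [SimpleGraph.mem_neighborFinset] at ha
        by_contra hau
        have h2 : ({a, u} : Finset V) ⊆ T.neighborFinset w := by
          intro c hc
          simp only [Finset.mem_insert, Finset.mem_singleton] at hc
          rcases hc with rfl | rfl
          · rwa [SimpleGraph.mem_neighborFinset]
          · rw [SimpleGraph.mem_neighborFinset]; exact huw.symm
        have := Finset.card_le_card h2
        rw [Finset.card_insert_of_notMem (by simpa using hau), Finset.card_singleton] at this
        rw [SimpleGraph.degree] at hdeg
        omega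
    have : b ∈ T.neighborFinset w := by rw [SimpleGraph.mem_neighborFinset]; exact hTadj
    rw [hnb, Finset.mem_singleton] at this
    subst this
    exact hne (by rw [Sym2.eq_swap]; rfl)

/-- At a degree-3 vertex `w` with neighbor `u`, get the other two neighbors. -/
lemma degree_three_neighbors [Fintype V] [DecidableRel T.Adj] {u w : V}
    (huw : T.Adj w u) (hdeg : T.degree w = 3) :
    ∃ x y, x ≠ y ∧ x ≠ u ∧ y ≠ u ∧ T.Adj w x ∧ T.Adj w y ∧
      ∀ p, T.Adj w p → p = u ∨ p = x ∨ p = y := by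
  have hu : u ∈ T.neighborFinset w := by rw [SimpleGraph.mem_neighborFinset]; exact huw
  have hcard : ((T.neighborFinset w).erase u).card = 2 := by
    rw [Finset.card_erase_of_mem hu]
    rw [SimpleGraph.degree] at hdeg
    omega
  obtain ⟨x, y, hxy, hset⟩ := Finset.card_eq_two.mp hcard
  have hx : x ∈ (T.neighborFinset w).erase u := by rw [hset]; simp
  have hy : y ∈ (T.neighborFinset w).erase u := by rw [hset]; simp
  refine ⟨x, y, hxy, Finset.ne_of_mem_erase hx, Finset.ne_of_mem_erase hy,
    (SimpleGraph.mem_neighborFinset _ _ _).mp (Finset.mem_of_mem_erase hx),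
    (SimpleGraph.mem_neighborFinset _ _ _).mp (Finset.mem_of_mem_erase hy), ?_⟩
  intro p hp
  by_cases hpu : p = u
  · exact Or.inl hpu
  · have : p ∈ (T.neighborFinset w).erase u := by
      rw [Finset.mem_erase]
      exact ⟨hpu, (SimpleGraph.mem_neighborFinset _ _ _).mpr hp⟩
    rw [hset] at this
    simp only [Finset.mem_insert, Finset.mem_singleton] at this
    exact Or.inr this


open scoped Classical in
/-- The elements of `A` on the `w`-side of the edge `uw`. -/
noncomputable def cAset (T : SimpleGraph V) (A : Finset V) (u w : V) : Finset V :=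
  A.filter fun a => (T.deleteEdges {s(u, w)}).Reachable a w

lemma mem_cAset {A : Finset V} {u w a : V} :
    a ∈ cAset T A u w ↔ a ∈ A ∧ (T.deleteEdges {s(u, w)}).Reachable a w := by
  classical
  unfold cAset
  exact Finset.mem_filter

/-- The number of elements of `A` whose leaf is on the `w`-side of the edge `uw`. -/
noncomputable def cA (T : SimpleGraph V) (A : Finset V) (u w : V) : ℕ := (cAset T A u w).card

open scoped Classical in
noncomputable def sideSet [Fintype V] (T : SimpleGraph V) (u w : V) : Finset V :=
  Finset.univ.filter fun z : V => (T.deleteEdges {s(u, w)}).Reachable z w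

lemma mem_sideSet [Fintype V] {u w z : V} :
    z ∈ sideSet T u w ↔ (T.deleteEdges {s(u, w)}).Reachable z w := by
  classical
  unfold sideSet
  rw [Finset.mem_filter]
  simp

noncomputable def sideCard [Fintype V] (T : SimpleGraph V) (u w : V) : ℕ :=
  (sideSet T u w).card

lemma deleteEdges_swap (T : SimpleGraph V) (u w : V) :
    T.deleteEdges {s(w, u)} = T.deleteEdges {s(u, w)} := by
  rw [Sym2.eq_swap]

lemma cA_sum (hT : T.IsTree) (A : Finset V) {u w : V}
    (huw : T.Adj u w) : cA T A u w + cA T A w u = A.card := by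
  unfold cA
  rw [← Finset.card_union_of_disjoint]
  · congr 1
    ext a
    rw [Finset.mem_union, mem_cAset, mem_cAset, deleteEdges_swap T u w]
    constructor
    · rintro (h | h) <;> exact h.1
    · intro ha
      rcases reach_or hT.isConnected u w a with h | h
      · exact Or.inr ⟨ha, h⟩
      · exact Or.inl ⟨ha, h⟩
  · rw [Finset.disjoint_left]
    intro a h1 h2
    rw [mem_cAset] at h1
    rw [mem_cAset, deleteEdges_swap T u w] at h2
    exact not_reach_both hT huw h2.2 h1.2

lemma balance_aux [Fintype V] [DecidableRel T.Adj] (hT : T.IsTree) (A : Finset V)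
    (hA2 : 2 ≤ A.card) (hAdeg : ∀ a ∈ A, T.degree a = 1)
    (hdeg : ∀ x : V, T.degree x = 1 ∨ T.degree x = 3) :
    ∀ n (u w : V), T.Adj u w → sideCard T u w ≤ n → A.card ≤ 3 * cA T A u w →
    ∃ u w : V, T.Adj u w ∧ A.card ≤ 3 * cA T A u w ∧ A.card ≤ 3 * cA T A w u := by
  intro n
  induction n with
  | zero =>
    intro u w huw hside _
    exfalso
    have hw : w ∈ sideSet T u w := mem_sideSet.mpr (Reachable.refl _)
    have := Finset.card_pos.mpr ⟨w, hw⟩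
    unfold sideCard at hside
    omega
  | succ n ih =>
    intro u w huw hside hbig
    by_cases hgood : A.card ≤ 3 * cA T A w u
    · exact ⟨u, w, huw, hbig, hgood⟩
    have hco := cA_sum hT A huw
    have hbig2 : 2 * A.card + 1 ≤ 3 * cA T A u w := by omega
    rcases hdeg w with hw1 | hw3
    · -- leaf: contradiction
      exfalso
      have hsub : cAset T A u w ⊆ {w} := by
        intro a ha
        rw [mem_cAset] at ha
        rw [Finset.mem_singleton]
        exact side_leaf huw hw1 ha.2
      have : cA T A u w ≤ 1 := by
        unfold cA
        calc (cAset T A u w).card ≤ ({w} : Finset V).card := Finset.card_le_card hsub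
          _ = 1 := Finset.card_singleton w
      omega
    · obtain ⟨x, y, hxy, hxu, hyu, hwx, hwy, hclass⟩ := degree_three_neighbors huw.symm hw3
      have hwA : w ∉ A := fun hw => by have := hAdeg w hw; omega
      have hsplit : cA T A u w ≤ cA T A w x + cA T A w y := by
        unfold cA
        refine le_trans (Finset.card_le_card ?_) (Finset.card_union_le _ _)
        intro a ha
        rw [mem_cAset] at ha
        obtain ⟨haA, har⟩ := ha
        have haw : a ≠ w := fun h => hwA (h ▸ haA)
        obtain ⟨x', hx'1, hx'2, hx'3⟩ := side_cover hT huw har haw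
        rcases hclass x' hx'1 with rfl | rfl | rfl
        · exact absurd rfl hx'2
        · exact Finset.mem_union_left _ (mem_cAset.mpr ⟨haA, hx'3⟩)
        · exact Finset.mem_union_right _ (mem_cAset.mpr ⟨haA, hx'3⟩)
      have hdec : ∀ x' : V, T.Adj w x' → x' ≠ u → sideCard T w x' < sideCard T u w := by
        intro x' hwx' hx'u
        unfold sideCard
        have hsub : sideSet T w x' ⊆ (sideSet T u w).erase w := by
          intro z hz
          rw [mem_sideSet] at hz
          obtain ⟨hr, hne⟩ := side_step hT huw hwx' hx'u hz
          rw [Finset.mem_erase, mem_sideSet]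
          exact ⟨hne, hr⟩
        have hwmem : w ∈ sideSet T u w := mem_sideSet.mpr (Reachable.refl _)
        exact lt_of_le_of_lt (Finset.card_le_card hsub) (Finset.card_erase_lt_of_mem hwmem)
      by_cases hchoose : cA T A w y ≤ cA T A w x
      · have hbigx : A.card ≤ 3 * cA T A w x := by omega
        have := hdec x hwx hxu
        exact ih w x hwx (by omega) hbigx
      · have hbigy : A.card ≤ 3 * cA T A w y := by omega
        have := hdec y hwy hyu
        exact ih w y hwy (by omega) hbigy

lemma balance [Fintype V] [DecidableRel T.Adj] (hT : T.IsTree) (A : Finset V)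
    (hA2 : 2 ≤ A.card) (hAdeg : ∀ a ∈ A, T.degree a = 1)
    (hdeg : ∀ x : V, T.degree x = 1 ∨ T.degree x = 3)
    (hedge : ∃ u w : V, T.Adj u w) :
    ∃ u w : V, T.Adj u w ∧ A.card ≤ 3 * cA T A u w ∧ A.card ≤ 3 * cA T A w u := by
  obtain ⟨u, w, huw⟩ := hedge
  have hco := cA_sum hT A huw
  by_cases h : A.card ≤ 3 * cA T A u w
  · exact balance_aux hT A hA2 hAdeg hdeg (sideCard T u w) u w huw le_rfl h
  · have : A.card ≤ 3 * cA T A w u := by omega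
    exact balance_aux hT A hA2 hAdeg hdeg (sideCard T w u) w u huw.symm le_rfl this


/-! ### Basic facts about `SS` -/

lemma inter_Icc_of_insert {k i : ℕ} (hi : i ∈ Finset.Icc 1 k) {w : Finset ℕ}
    (hw : w ⊆ Finset.Icc (k + 1) (2 * k)) :
    insert i w ∩ Finset.Icc 1 k = {i} := by
  rw [Finset.mem_Icc] at hi
  ext a
  simp only [Finset.mem_inter, Finset.mem_insert, Finset.mem_singleton, Finset.mem_Icc]
  constructor
  · rintro ⟨rfl | haw, h1, h2⟩
    · rfl
    · have := Finset.mem_Icc.mp (hw haw); omega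
  · rintro rfl
    exact ⟨Or.inl rfl, hi.1, hi.2⟩

lemma mem_SS_insert {k i : ℕ} (hi : i ∈ Finset.Icc 1 k) {w : Finset ℕ}
    (hw : w ⊆ Finset.Icc (k + 1) (2 * k)) : insert i w ∈ SS k := by
  rw [Finset.mem_Icc] at hi
  simp only [SS, Finset.mem_filter, Finset.mem_powerset]
  constructor
  · intro a ha
    rw [Finset.mem_insert] at ha
    rw [Finset.mem_Icc]
    rcases ha with rfl | ha
    · omega
    · have := Finset.mem_Icc.mp (hw ha); omega
  · rw [inter_Icc_of_insert (Finset.mem_Icc.mpr hi) hw, Finset.card_singleton]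

lemma sdiff_insert_of {k i : ℕ} (hi : i ∈ Finset.Icc 1 k) {w : Finset ℕ}
    (hw : w ⊆ Finset.Icc (k + 1) (2 * k)) : insert i w \ Finset.Icc 1 k = w := by
  ext a
  simp only [Finset.mem_sdiff, Finset.mem_insert]
  rw [Finset.mem_Icc] at hi
  constructor
  · rintro ⟨rfl | haw, h⟩
    · exact absurd (Finset.mem_Icc.mpr ⟨hi.1, hi.2⟩) h
    · exact haw
  · intro haw
    have := Finset.mem_Icc.mp (hw haw)
    refine ⟨Or.inr haw, ?_⟩
    rw [Finset.mem_Icc]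
    omega

lemma card_Icc_half (k : ℕ) : (Finset.Icc (k + 1) (2 * k)).card = k := by
  rw [Nat.card_Icc]; omega

lemma card_SS_ge (k : ℕ) : k * 2 ^ k ≤ (SS k).card := by
  classical
  have := Finset.card_le_card_of_injOn
    (f := fun p : ℕ × Finset ℕ => insert p.1 p.2)
    (s := Finset.Icc 1 k ×ˢ (Finset.Icc (k + 1) (2 * k)).powerset) (t := SS k) ?_ ?_
  · calc k * 2 ^ k
        = (Finset.Icc 1 k ×ˢ (Finset.Icc (k + 1) (2 * k)).powerset).card := by
          rw [Finset.card_product, Nat.card_Icc, Finset.card_powerset, card_Icc_half]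
          congr 1
      _ ≤ (SS k).card := this
  · rintro ⟨i, w⟩ hp
    rw [Finset.mem_coe, Finset.mem_product, Finset.mem_powerset] at hp
    exact mem_SS_insert hp.1 hp.2
  · rintro ⟨i, w⟩ hp ⟨i', w'⟩ hp' heq
    rw [Finset.mem_coe, Finset.mem_product, Finset.mem_powerset] at hp hp'
    obtain ⟨hp1, hp2⟩ := hp
    obtain ⟨hp1', hp2'⟩ := hp'
    simp only at heq hp1 hp2 hp1' hp2'
    have h1 : ({i} : Finset ℕ) = {i'} := by
      rw [← inter_Icc_of_insert hp1 hp2, ← inter_Icc_of_insert hp1' hp2', heq]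
    have hii : i = i' := by
      rwa [Finset.singleton_inj] at h1
    have h2 : w = w' := by
      rw [← sdiff_insert_of hp1 hp2, ← sdiff_insert_of hp1' hp2', heq]
    simp [hii, h2]

/-! ### Adjacency facts -/

lemma adj_ab {k : ℕ} (s : ↥(SS k)) (j : Fin (k * k)) (t : ↥(PP k)) :
    (BWGraph k).Adj (Sum.inl s) (Sum.inr (j, t)) ↔ Odd (s.val ∩ t.val).card := by
  rw [BWGraph, SimpleGraph.fromRel_adj]
  constructor
  · rintro ⟨-, h | h⟩
    · exact h
    · exact absurd h (by simp [bwRel])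
  · intro h
    exact ⟨by simp, Or.inl h⟩

lemma adj_bb {k : ℕ} (j j' : Fin (k * k)) (t t' : ↥(PP k)) :
    (BWGraph k).Adj (Sum.inr (j, t)) (Sum.inr (j', t')) ↔ (j = j' ∧ t ≠ t') := by
  rw [BWGraph, SimpleGraph.fromRel_adj]
  constructor
  · rintro ⟨hne, h | h⟩
    · have hj : j = j' := h
      exact ⟨hj, fun ht => hne (by rw [hj, ht])⟩
    · have hj : j' = j := h
      exact ⟨hj.symm, fun ht => hne (by rw [hj, ht])⟩
  · rintro ⟨rfl, hne⟩
    exact ⟨by simp [hne], Or.inl rfl⟩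

lemma not_adj_ba {k : ℕ} (s : ↥(SS k)) (j : Fin (k * k)) (t : ↥(PP k)) :
    (BWGraph k).Adj (Sum.inr (j, t)) (Sum.inl s) ↔ Odd (s.val ∩ t.val).card := by
  rw [SimpleGraph.adj_comm]
  exact adj_ab s j t

/-! ### From a `Finset` injection to an `ncard` bound -/

lemma card_le_ncard_of_injOn {α γ : Type*} [Finite γ] (D : Finset α) (f : α → Set γ)
    (Sset : Set (Set γ)) (hmaps : ∀ a ∈ D, f a ∈ Sset) (hinj : Set.InjOn f D) :
    D.card ≤ Sset.ncard := by
  classical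
  calc D.card = (D.image f).card := (Finset.card_image_of_injOn hinj).symm
    _ = (↑(D.image f) : Set (Set γ)).ncard := (Set.ncard_coe_finset _).symm
    _ ≤ Sset.ncard := by
        apply Set.ncard_le_ncard _ (Set.toFinite _)
        intro S hS
        rw [Finset.coe_image] at hS
        obtain ⟨a, ha, rfl⟩ := hS
        exact hmaps a ha

/-! ### Case 1: every clique is split -/

lemma count_case1 {k : ℕ} (Lset Rset : Set (BWVertex k))
    (hdisj : ∀ v, v ∈ Lset → v ∈ Rset → False)
    (tL tR : Fin (k * k) → ↥(PP k))
    (hL : ∀ j, (Sum.inr (j, tL j) : BWVertex k) ∈ Lset)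
    (hR : ∀ j, (Sum.inr (j, tR j) : BWVertex k) ∈ Rset) :
    (2 : ℝ) ^ (((k : ℝ) * ((k : ℝ) - 3)) / 6) ≤
      (({S : Set (BWVertex k) | ∃ X ⊆ Lset, S = nbhdSet (BWGraph k) X ∩ Rset}).ncard : ℝ) := by
  classical
  set XZ : Finset (Fin (k * k)) → Set (BWVertex k) :=
    fun Z => {v | ∃ j ∈ Z, v = Sum.inr (j, tL j)} with hXZ
  set f : Finset (Fin (k * k)) → Set (BWVertex k) :=
    fun Z => nbhdSet (BWGraph k) (XZ Z) ∩ Rset with hf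
  have hXZL : ∀ Z, XZ Z ⊆ Lset := by
    rintro Z v ⟨j, hj, rfl⟩
    exact hL j
  have key : ∀ Z Z' : Finset (Fin (k * k)), ∀ j₀, j₀ ∈ Z → j₀ ∉ Z' → f Z ≠ f Z' := by
    intro Z Z' j₀ hj₀ hj₀' heq
    have hβZ : (Sum.inr (j₀, tR j₀) : BWVertex k) ∈ f Z := by
      refine ⟨⟨?_, ⟨Sum.inr (j₀, tL j₀), ⟨j₀, hj₀, rfl⟩, ?_⟩⟩, hR j₀⟩
      · rintro ⟨j, hj, hv⟩
        injection hv with h1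
        injection h1 with h2 h3
        subst h2
        exact hdisj _ (hL j₀) (h3 ▸ hR j₀)
      · rw [adj_bb]
        refine ⟨rfl, fun ht => ?_⟩
        exact hdisj _ (hL j₀) (ht ▸ hR j₀)
    have hβZ' : (Sum.inr (j₀, tR j₀) : BWVertex k) ∉ f Z' := by
      rintro ⟨⟨-, x, hx, hadj⟩, -⟩
      obtain ⟨j, hj, rfl⟩ := hx
      rw [adj_bb] at hadj
      exact hj₀' (hadj.1 ▸ hj)
    rw [heq] at hβZ
    exact hβZ' hβZ
  have hinj : Set.InjOn f (Finset.univ : Finset (Finset (Fin (k * k)))) := by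
    intro Z hZ Z' hZ' heq
    by_contra hne
    have hor : ¬ (Z ⊆ Z') ∨ ¬ (Z' ⊆ Z) := by
      by_contra hc
      push_neg at hc
      exact hne (Finset.Subset.antisymm hc.1 hc.2)
    rcases hor with h | h
    · obtain ⟨j₀, hj₀, hj₀'⟩ := Finset.not_subset.mp h
      exact key Z Z' j₀ hj₀ hj₀' heq
    · obtain ⟨j₀, hj₀, hj₀'⟩ := Finset.not_subset.mp h
      exact key Z' Z j₀ hj₀ hj₀' heq.symm
  have hcard := card_le_ncard_of_injOn (Finset.univ : Finset (Finset (Fin (k * k)))) f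
    {S : Set (BWVertex k) | ∃ X ⊆ Lset, S = nbhdSet (BWGraph k) X ∩ Rset}
    (fun Z _ => ⟨XZ Z, hXZL Z, rfl⟩) hinj
  rw [Finset.card_univ, Fintype.card_finset, Fintype.card_fin] at hcard
  calc (2 : ℝ) ^ (((k : ℝ) * ((k : ℝ) - 3)) / 6)
      ≤ (2 : ℝ) ^ ((k * k : ℕ) : ℝ) := by
        apply Real.rpow_le_rpow_of_exponent_le one_le_two
        push_cast
        nlinarith [sq_nonneg ((k : ℝ)), Nat.cast_nonneg (α := ℝ) k]
    _ = ((2 ^ (k * k) : ℕ) : ℝ) := by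
        rw [Nat.cast_pow, Real.rpow_natCast]
        norm_num
    _ ≤ _ := by exact_mod_cast hcard

/-! ### The `W` families and case 2 -/

open scoped Classical in
noncomputable def Wside (k : ℕ) (Lset : Set (BWVertex k)) (i : ℕ) : Finset (Finset ℕ) :=
  (Finset.Icc (k + 1) (2 * k)).powerset.filter fun w =>
    ∀ hs : insert i w ∈ SS k, (Sum.inl ⟨insert i w, hs⟩ : BWVertex k) ∈ Lset

lemma mem_Wside {k : ℕ} {Lset : Set (BWVertex k)} {i : ℕ} {w : Finset ℕ} :
    w ∈ Wside k Lset i ↔ w ⊆ Finset.Icc (k + 1) (2 * k) ∧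
      ∀ hs : insert i w ∈ SS k, (Sum.inl ⟨insert i w, hs⟩ : BWVertex k) ∈ Lset := by
  classical
  unfold Wside
  rw [Finset.mem_filter, Finset.mem_powerset]

lemma Wside_card_le {k : ℕ} (Lset : Set (BWVertex k)) (i : ℕ) :
    (Wside k Lset i).card ≤ 2 ^ k := by
  classical
  calc (Wside k Lset i).card ≤ (Finset.Icc (k + 1) (2 * k)).powerset.card :=
        Finset.card_le_card (by unfold Wside; exact Finset.filter_subset _ _)
    _ = 2 ^ k := by rw [Finset.card_powerset, card_Icc_half]

lemma SS_spec {k : ℕ} (s : ↥(SS k)) :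
    s.val ⊆ Finset.Icc 1 (2 * k) ∧ (s.val ∩ Finset.Icc 1 k).card = 1 := by
  have := s.2
  simp only [SS, Finset.mem_filter, Finset.mem_powerset] at this
  exact this

noncomputable def idxOf {k : ℕ} (s : ↥(SS k)) : ℕ :=
  (s.val ∩ Finset.Icc 1 k).min'
    (Finset.card_pos.mp (by rw [(SS_spec s).2]; norm_num))

lemma idx_mem_inter {k : ℕ} (s : ↥(SS k)) : idxOf s ∈ s.val ∩ Finset.Icc 1 k :=
  Finset.min'_mem _ _

lemma idx_inter {k : ℕ} (s : ↥(SS k)) : s.val ∩ Finset.Icc 1 k = {idxOf s} := by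
  obtain ⟨i, hi⟩ := Finset.card_eq_one.mp (SS_spec s).2
  have hmem := idx_mem_inter s
  rw [hi, Finset.mem_singleton] at hmem
  rw [hi, hmem]

lemma idx_mem_Icc {k : ℕ} (s : ↥(SS k)) : idxOf s ∈ Finset.Icc 1 k :=
  (Finset.mem_inter.mp (idx_mem_inter s)).2

lemma wOf_subset {k : ℕ} (s : ↥(SS k)) :
    s.val \ Finset.Icc 1 k ⊆ Finset.Icc (k + 1) (2 * k) := by
  intro a ha
  rw [Finset.mem_sdiff] at ha
  have h1 := Finset.mem_Icc.mp ((SS_spec s).1 ha.1)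
  have h2 := ha.2
  rw [Finset.mem_Icc] at h2 ⊢
  omega

lemma insert_idx {k : ℕ} (s : ↥(SS k)) :
    insert (idxOf s) (s.val \ Finset.Icc 1 k) = s.val := by
  have hidx : idxOf s ∈ s.val := (Finset.mem_inter.mp (idx_mem_inter s)).1
  ext a
  rw [Finset.mem_insert, Finset.mem_sdiff]
  constructor
  · rintro (rfl | ⟨h, -⟩)
    · exact hidx
    · exact h
  · intro ha
    by_cases hIcc : a ∈ Finset.Icc 1 k
    · left
      have : a ∈ s.val ∩ Finset.Icc 1 k := Finset.mem_inter.mpr ⟨ha, hIcc⟩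
      rw [idx_inter, Finset.mem_singleton] at this
      exact this
    · exact Or.inr ⟨ha, hIcc⟩

open scoped Classical in
lemma acount_le_sum (k : ℕ) (Lset : Set (BWVertex k)) :
    ((Finset.univ : Finset ↥(SS k)).filter
        fun s => (Sum.inl s : BWVertex k) ∈ Lset).card
      ≤ ∑ i ∈ Finset.Icc 1 k, (Wside k Lset i).card := by
  classical
  rw [← Finset.card_sigma]
  apply Finset.card_le_card_of_injOn
    (f := fun s : ↥(SS k) => (⟨idxOf s, s.val \ Finset.Icc 1 k⟩ : Σ _ : ℕ, Finset ℕ))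
  · intro s hs
    rw [Finset.mem_coe, Finset.mem_filter] at hs
    rw [Finset.mem_coe, Finset.mem_sigma]
    refine ⟨idx_mem_Icc s, ?_⟩
    rw [mem_Wside]
    refine ⟨wOf_subset s, ?_⟩
    intro hs'
    have hval : (⟨insert (idxOf s) (s.val \ Finset.Icc 1 k), hs'⟩ : ↥(SS k)) = s :=
      Subtype.ext (insert_idx s)
    rw [hval]
    exact hs.2
  · intro s hs s' hs' heq
    simp only [Sigma.mk.inj_iff] at heq
    obtain ⟨h1, h2⟩ := heq
    have h2' : s.val \ Finset.Icc 1 k = s'.val \ Finset.Icc 1 k := eq_of_heq h2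
    apply Subtype.ext
    rw [← insert_idx s, ← insert_idx s', h1, h2']

/-- The key parity computation. -/
lemma card_insert_inter {k i q : ℕ} {w C : Finset ℕ} (hi : i ∈ Finset.Icc 1 k)
    (hw : w ⊆ Finset.Icc (k + 1) (2 * k)) (hq : q ∈ Finset.Icc (k + 1) (2 * k))
    (hC : C ⊆ Finset.Icc 1 k) :
    (insert i w ∩ insert q C).card
      = (if i ∈ C then 1 else 0) + (if q ∈ w then 1 else 0) := by
  classical
  have hiq : i ≠ q := by
    have h1 := Finset.mem_Icc.mp hi
    have h2 := Finset.mem_Icc.mp hq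
    omega
  have hset : insert i w ∩ insert q C =
      (if i ∈ C then ({i} : Finset ℕ) else ∅) ∪ (if q ∈ w then ({q} : Finset ℕ) else ∅) := by
    ext a
    constructor
    · intro ha
      rw [Finset.mem_inter, Finset.mem_insert, Finset.mem_insert] at ha
      obtain ⟨hL, hR⟩ := ha
      rw [Finset.mem_union]
      rcases hL with rfl | haw
      · rcases hR with h | h
        · exact absurd h hiq
        · left; rw [if_pos h]; exact Finset.mem_singleton_self _
      · rcases hR with rfl | h
        · right; rw [if_pos haw]; exact Finset.mem_singleton_self _
        · have h1 := Finset.mem_Icc.mp (hw haw)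
          have h2 := Finset.mem_Icc.mp (hC h)
          omega
    · intro ha
      rw [Finset.mem_union] at ha
      rw [Finset.mem_inter, Finset.mem_insert, Finset.mem_insert]
      rcases ha with ha | ha
      · by_cases h : i ∈ C
        · rw [if_pos h, Finset.mem_singleton] at ha
          subst ha
          exact ⟨Or.inl rfl, Or.inr h⟩
        · rw [if_neg h] at ha; exact absurd ha (Finset.notMem_empty _)
      · by_cases h : q ∈ w
        · rw [if_pos h, Finset.mem_singleton] at ha
          subst ha
          exact ⟨Or.inr h, Or.inl rfl⟩
        · rw [if_neg h] at ha; exact absurd ha (Finset.notMem_empty _)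
  rw [hset, Finset.card_union_of_disjoint]
  · congr 1 <;> split_ifs <;> simp
  · split_ifs <;> simp [hiq, Ne.symm hiq]

lemma count_case2 {k : ℕ} (hk4 : 4 ≤ k) (Lset Rset : Set (BWVertex k)) (j : Fin (k * k))
    (hclq : ∀ t : ↥(PP k), (Sum.inr (j, t) : BWVertex k) ∈ Rset)
    (hsum : k * 2 ^ k ≤ 3 * ∑ i ∈ Finset.Icc 1 k, (Wside k Lset i).card) :
    (2 : ℝ) ^ (((k : ℝ) * ((k : ℝ) - 3)) / 6) ≤
      (({S : Set (BWVertex k) | ∃ X ⊆ Lset, S = nbhdSet (BWGraph k) X ∩ Rset}).ncard : ℝ) := by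
  classical
  set I : Finset ℕ := (Finset.Icc 1 k).filter
    (fun i => 2 ^ (k - 3) ≤ (Wside k Lset i).card) with hI
  have hImem : ∀ i ∈ I, i ∈ Finset.Icc 1 k := fun i hi => (Finset.mem_filter.mp hi).1
  -- cardinality of I
  have hIcard : k ≤ 6 * I.card := by
    set θ := 2 ^ (k - 3) with hθdef
    have hθ : 1 ≤ θ := Nat.one_le_two_pow
    have hpow : 2 ^ k = 8 * θ := by
      have h3 : 3 + (k - 3) = k := by omega
      calc 2 ^ k = 2 ^ (3 + (k - 3)) := by rw [h3]
        _ = 2 ^ 3 * 2 ^ (k - 3) := pow_add 2 3 (k - 3)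
        _ = 8 * θ := by rw [hθdef]; norm_num
    have h1 : ∑ i ∈ Finset.Icc 1 k, (Wside k Lset i).card
        = ∑ i ∈ I, (Wside k Lset i).card
          + ∑ i ∈ (Finset.Icc 1 k).filter
              (fun i => ¬ 2 ^ (k - 3) ≤ (Wside k Lset i).card), (Wside k Lset i).card :=
      (Finset.sum_filter_add_sum_filter_not _ _ _).symm
    have h2 : ∑ i ∈ I, (Wside k Lset i).card ≤ I.card * (8 * θ) := by
      rw [← hpow]
      calc ∑ i ∈ I, (Wside k Lset i).card ≤ I.card • (2 ^ k) :=
            Finset.sum_le_card_nsmul _ _ _ (fun i _ => Wside_card_le Lset i)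
        _ = I.card * 2 ^ k := by rw [smul_eq_mul]
    have h3 : ∑ i ∈ (Finset.Icc 1 k).filter
        (fun i => ¬ 2 ^ (k - 3) ≤ (Wside k Lset i).card), (Wside k Lset i).card
        ≤ k * θ := by
      calc _ ≤ ((Finset.Icc 1 k).filter
            (fun i => ¬ 2 ^ (k - 3) ≤ (Wside k Lset i).card)).card • θ :=
            Finset.sum_le_card_nsmul _ _ _
              (fun i hi => le_of_not_ge (Finset.mem_filter.mp hi).2)
        _ ≤ k • θ := by
            apply smul_le_smul_of_nonneg_right _ (Nat.zero_le θ)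
            calc _ ≤ (Finset.Icc 1 k).card := Finset.card_filter_le _ _
              _ = k := by rw [Nat.card_Icc]; omega
        _ = k * θ := by rw [smul_eq_mul]
    -- combine
    have hmain : 8 * (k * θ) ≤ 24 * (I.card * θ) + 3 * (k * θ) := by
      have e1 : k * (8 * θ) ≤ 3 * (I.card * (8 * θ)) + 3 * (k * θ) := by
        calc k * (8 * θ) = k * 2 ^ k := by rw [hpow]
          _ ≤ 3 * ∑ i ∈ Finset.Icc 1 k, (Wside k Lset i).card := hsum
          _ = 3 * (∑ i ∈ I, (Wside k Lset i).card
              + ∑ i ∈ (Finset.Icc 1 k).filter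
                  (fun i => ¬ 2 ^ (k - 3) ≤ (Wside k Lset i).card),
                  (Wside k Lset i).card) := by rw [← h1]
          _ ≤ 3 * (I.card * (8 * θ) + k * θ) := by
              apply Nat.mul_le_mul_left
              exact Nat.add_le_add h2 h3
          _ = 3 * (I.card * (8 * θ)) + 3 * (k * θ) := by ring
      calc 8 * (k * θ) = k * (8 * θ) := by ring
        _ ≤ 3 * (I.card * (8 * θ)) + 3 * (k * θ) := e1
        _ = 24 * (I.card * θ) + 3 * (k * θ) := by ring
    have h5 : 5 * k * θ ≤ 24 * I.card * θ := by
      have : 5 * (k * θ) ≤ 24 * (I.card * θ) := by omega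
      calc 5 * k * θ = 5 * (k * θ) := by ring
        _ ≤ 24 * (I.card * θ) := this
        _ = 24 * I.card * θ := by ring
    have h6 : 5 * k ≤ 24 * I.card := Nat.le_of_mul_le_mul_right h5 (by omega)
    omega
  -- the domain
  set D := I.pi (fun i => Wside k Lset i) with hD
  have hDcard : 2 ^ ((k - 3) * I.card) ≤ D.card := by
    rw [hD, Finset.card_pi]
    calc 2 ^ ((k - 3) * I.card) = ∏ _i ∈ I, 2 ^ (k - 3) := by
          rw [Finset.prod_const, ← pow_mul]
      _ ≤ ∏ i ∈ I, (Wside k Lset i).card :=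
          Finset.prod_le_prod' (fun i hi => (Finset.mem_filter.mp hi).2)
  -- the map
  set XF : (∀ i ∈ I, Finset ℕ) → Set (BWVertex k) := fun F =>
    {v | ∃ i, ∃ hi : i ∈ I, ∃ hs : insert i (F i hi) ∈ SS k,
      v = Sum.inl ⟨insert i (F i hi), hs⟩} with hXF
  set f : (∀ i ∈ I, Finset ℕ) → Set (BWVertex k) := fun F =>
    nbhdSet (BWGraph k) (XF F) ∩ Rset with hf
  have hXFL : ∀ F ∈ D, XF F ⊆ Lset := by
    intro F hF v hv
    obtain ⟨i, hi, hs, rfl⟩ := hv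
    have hWF := (Finset.mem_pi.mp hF) i hi
    exact (mem_Wside.mp hWF).2 hs
  -- injectivity
  have key : ∀ F ∈ D, ∀ G ∈ D, f F = f G → F = G := by
    intro F hF G hG heq
    by_contra hne
    have hex : ∃ i₀, ∃ hi₀ : i₀ ∈ I, F i₀ hi₀ ≠ G i₀ hi₀ := by
      by_contra hall
      push_neg at hall
      apply hne
      funext i hi
      exact hall i hi
    obtain ⟨i₀, hi₀, hFG⟩ := hex
    have hq : ∃ q, (q ∈ F i₀ hi₀ ∧ q ∉ G i₀ hi₀) ∨ (q ∉ F i₀ hi₀ ∧ q ∈ G i₀ hi₀) := by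
      by_contra hq
      push_neg at hq
      apply hFG
      ext a
      have := hq a
      tauto
    obtain ⟨q, hqcase⟩ := hq
    have hWF₀ := mem_Wside.mp ((Finset.mem_pi.mp hF) i₀ hi₀)
    have hWG₀ := mem_Wside.mp ((Finset.mem_pi.mp hG) i₀ hi₀)
    have hqmem : q ∈ Finset.Icc (k + 1) (2 * k) := by
      rcases hqcase with ⟨h, -⟩ | ⟨-, h⟩
      · exact hWF₀.1 h
      · exact hWG₀.1 h
    set C : Finset ℕ := I.filter (fun i' => ∀ hi' : i' ∈ I, q ∈ F i' hi') with hC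
    have hCsub : C ⊆ Finset.Icc 1 k := by
      intro a ha
      exact hImem a (Finset.mem_of_mem_filter a ha)
    have hCmem : ∀ i' (hi' : i' ∈ I), (i' ∈ C ↔ q ∈ F i' hi') := by
      intro i' hi'
      rw [hC, Finset.mem_filter]
      constructor
      · rintro ⟨-, h⟩; exact h hi'
      · intro h; exact ⟨hi', fun _ => h⟩
    have htPP : insert q C ∈ PP k := by
      rw [Finset.mem_powerset]
      intro a ha
      rw [Finset.mem_insert] at ha
      rw [Finset.mem_Icc]
      rcases ha with rfl | ha
      · have := Finset.mem_Icc.mp hqmem; omega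
      · have := Finset.mem_Icc.mp (hCsub ha); omega
    have heven : ∀ i' (hi' : i' ∈ I),
        ¬ Odd ((insert i' (F i' hi') ∩ insert q C).card) := by
      intro i' hi'
      have hWF := mem_Wside.mp ((Finset.mem_pi.mp hF) i' hi')
      rw [card_insert_inter (hImem i' hi') hWF.1 hqmem hCsub]
      by_cases hqF : q ∈ F i' hi'
      · rw [if_pos ((hCmem i' hi').mpr hqF), if_pos hqF]
        decide
      · rw [if_neg (fun hc => hqF ((hCmem i' hi').mp hc)), if_neg hqF]
        decide
    have hodd : Odd ((insert i₀ (G i₀ hi₀) ∩ insert q C).card) := by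
      rw [card_insert_inter (hImem i₀ hi₀) hWG₀.1 hqmem hCsub]
      rcases hqcase with ⟨h1, h2⟩ | ⟨h1, h2⟩
      · rw [if_pos ((hCmem i₀ hi₀).mpr h1), if_neg h2]
        decide
      · rw [if_neg (fun hc => h1 ((hCmem i₀ hi₀).mp hc)), if_pos h2]
        decide
    set β : BWVertex k := Sum.inr (j, ⟨insert q C, htPP⟩) with hβ
    have hβG : β ∈ f G := by
      refine ⟨⟨?_, ?_⟩, hclq _⟩
      · rintro ⟨i, hi, hs, hv⟩
        rw [hβ] at hv
        cases hv
      · refine ⟨Sum.inl ⟨insert i₀ (G i₀ hi₀),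
          mem_SS_insert (hImem i₀ hi₀) hWG₀.1⟩, ⟨i₀, hi₀, _, rfl⟩, ?_⟩
        rw [hβ, adj_ab]
        exact hodd
    have hβF : β ∉ f F := by
      rintro ⟨⟨-, x, hx, hadj⟩, -⟩
      obtain ⟨i, hi, hs, rfl⟩ := hx
      rw [hβ, adj_ab] at hadj
      exact heven i hi hadj
    rw [heq] at hβF
    exact hβF hβG
  have hinj : Set.InjOn f ↑D := by
    intro F hF G hG heq
    exact key F (Finset.mem_coe.mp hF) G (Finset.mem_coe.mp hG) heq
  have hcard := card_le_ncard_of_injOn D f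
    {S : Set (BWVertex k) | ∃ X ⊆ Lset, S = nbhdSet (BWGraph k) X ∩ Rset}
    (fun F hF => ⟨XF F, hXFL F hF, rfl⟩) hinj
  -- final real arithmetic
  have hchain : (2 : ℕ) ^ ((k - 3) * I.card) ≤
      ({S : Set (BWVertex k) | ∃ X ⊆ Lset, S = nbhdSet (BWGraph k) X ∩ Rset}).ncard :=
    le_trans hDcard hcard
  calc (2 : ℝ) ^ (((k : ℝ) * ((k : ℝ) - 3)) / 6)
      ≤ (2 : ℝ) ^ (((k - 3) * I.card : ℕ) : ℝ) := by
        apply Real.rpow_le_rpow_of_exponent_le one_le_two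
        have hcast : (((k - 3) * I.card : ℕ) : ℝ) = ((k : ℝ) - 3) * (I.card : ℕ) := by
          push_cast [Nat.cast_sub (by omega : 3 ≤ k)]
          ring
        rw [hcast, div_le_iff₀ (by norm_num : (0:ℝ) < 6)]
        have hIR : (k : ℝ) ≤ 6 * (I.card : ℝ) := by exact_mod_cast hIcard
        have hk3 : (0:ℝ) ≤ (k : ℝ) - 3 := by
          have : (4:ℝ) ≤ (k : ℝ) := by exact_mod_cast hk4
          linarith
        nlinarith
    _ = ((2 ^ ((k - 3) * I.card) : ℕ) : ℝ) := by
        rw [Nat.cast_pow, Real.rpow_natCast]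
        norm_num
    _ ≤ _ := by exact_mod_cast hchain


end BWProof

/-- every branch decomposition of the vertex set of the Boolean-width
separation construction `G` (a tree `T` on `N` with all internal nodes of degree 3 and
leaves in bijection with `V(G)` via `φ`) has an edge `uw` displaying a bipartition
`(L,R)` — `L` (resp. `R`) being the vertices whose leaves lie in the component of
`T - uw` containing `u` (resp. `w`) — with at least `2^(k(k−3)/6)` distinct
neighborhoods `{N_G(X) ∩ R : X ⊆ L}` or at least `2^(k(k−3)/6)` distinct neighborhoods
`{N_G(X) ∩ L : X ⊆ R}`; in particular the Boolean-width of `G` is at least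
`k(k−3)/6`. -/
theorem BWGraph_booleanwidth_lower_bound (k : ℕ) (hk : 1 ≤ k)
    {N : Type*} [Fintype N] [DecidableEq N]
    (T : SimpleGraph N) [DecidableRel T.Adj] (hT : T.IsTree)
    (hdeg : ∀ x : N, T.degree x = 1 ∨ T.degree x = 3)
    (φ : BWVertex k → N) (hinj : Function.Injective φ)
    (hleaf : ∀ v : BWVertex k, T.degree (φ v) = 1)
    (hsurj : ∀ x : N, T.degree x = 1 → ∃ v : BWVertex k, φ v = x) :
    ∃ u w : N, T.Adj u w ∧
      (let L : Set (BWVertex k) :=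
        {v | (T.deleteEdges {s(u, w)}).Reachable (φ v) u}
      let R : Set (BWVertex k) :=
        {v | (T.deleteEdges {s(u, w)}).Reachable (φ v) w}
      (2 : ℝ) ^ (((k : ℝ) * ((k : ℝ) - 3)) / 6) ≤
          ({S : Set (BWVertex k) | ∃ X ⊆ L, S = nbhdSet (BWGraph k) X ∩ R}.ncard : ℝ) ∨
        (2 : ℝ) ^ (((k : ℝ) * ((k : ℝ) - 3)) / 6) ≤
          ({S : Set (BWVertex k) | ∃ X ⊆ R, S = nbhdSet (BWGraph k) X ∩ L}.ncard : ℝ)) := by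
  classical
  open BWProof in
  have hinj2 : Function.Injective (fun s : ↥(SS k) => φ (Sum.inl s)) :=
    fun a b h => Sum.inl_injective (hinj h)
  set A : Finset N := Finset.univ.image (fun s : ↥(SS k) => φ (Sum.inl s)) with hA
  have hAcard : A.card = (SS k).card := by
    rw [hA, Finset.card_image_of_injective _ hinj2, Finset.card_univ, Fintype.card_coe]
  have hSS := BWProof.card_SS_ge k
  have hk2 : 2 ≤ k * 2 ^ k := by
    calc 2 = 1 * 2 ^ 1 := by norm_num
      _ ≤ k * 2 ^ k := Nat.mul_le_mul hk (Nat.pow_le_pow_right (by norm_num) hk)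
  have hA2 : 2 ≤ A.card := by omega
  have hAdeg : ∀ a ∈ A, T.degree a = 1 := by
    intro a ha
    rw [hA, Finset.mem_image] at ha
    obtain ⟨s, -, rfl⟩ := ha
    exact hleaf _
  have hedge : ∃ u w : N, T.Adj u w := by
    have h2 : 1 < A.card := by omega
    obtain ⟨a, ha, b, hb, hab⟩ := Finset.one_lt_card.mp h2
    obtain ⟨p⟩ := hT.isConnected.preconnected a b
    cases p with
    | nil => exact absurd rfl hab
    | cons h q => exact ⟨_, _, h⟩
  obtain ⟨u, w, huw, hcuw, hcwu⟩ := BWProof.balance hT A hA2 hAdeg hdeg hedge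
  refine ⟨u, w, huw, ?_⟩
  set Lset : Set (BWVertex k) := {v | (T.deleteEdges {s(u, w)}).Reachable (φ v) u}
    with hLset
  set Rset : Set (BWVertex k) := {v | (T.deleteEdges {s(u, w)}).Reachable (φ v) w}
    with hRset
  have hdisj : ∀ v, v ∈ Lset → v ∈ Rset → False := fun v h1 h2 =>
    BWProof.not_reach_both hT huw h1 h2
  have hcover : ∀ v : BWVertex k, v ∈ Lset ∨ v ∈ Rset := fun v =>
    BWProof.reach_or hT.isConnected u w (φ v)
  -- relate the balance counts to the filters over `SS k`
  have hcR : BWProof.cA T A u w ≤ ∑ i ∈ Finset.Icc 1 k, (BWProof.Wside k Rset i).card := by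
    refine le_trans ?_ (BWProof.acount_le_sum k Rset)
    have himg : BWProof.cAset T A u w
        = ((Finset.univ : Finset ↥(SS k)).filter
            (fun s => (Sum.inl s : BWVertex k) ∈ Rset)).image
          (fun s => φ (Sum.inl s)) := by
      ext a
      rw [BWProof.mem_cAset]
      constructor
      · rintro ⟨haA, har⟩
        have h' : a ∈ Finset.univ.image (fun s : ↥(SS k) => φ (Sum.inl s)) := haA
        rw [Finset.mem_image] at h'
        obtain ⟨s, -, rfl⟩ := h'
        exact Finset.mem_image_of_mem _ (Finset.mem_filter.mpr ⟨Finset.mem_univ _, har⟩)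
      · intro h
        rw [Finset.mem_image] at h
        obtain ⟨s, hsf, rfl⟩ := h
        exact ⟨Finset.mem_image_of_mem _ (Finset.mem_univ _), (Finset.mem_filter.mp hsf).2⟩
    unfold BWProof.cA
    rw [himg, Finset.card_image_of_injective _ hinj2]
    exact le_of_eq (by congr!)
  have hcL : BWProof.cA T A w u ≤ ∑ i ∈ Finset.Icc 1 k, (BWProof.Wside k Lset i).card := by
    refine le_trans ?_ (BWProof.acount_le_sum k Lset)
    have himg : BWProof.cAset T A w u
        = ((Finset.univ : Finset ↥(SS k)).filter
            (fun s => (Sum.inl s : BWVertex k) ∈ Lset)).image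
          (fun s => φ (Sum.inl s)) := by
      ext a
      rw [BWProof.mem_cAset, BWProof.deleteEdges_swap T u w]
      constructor
      · rintro ⟨haA, har⟩
        have h' : a ∈ Finset.univ.image (fun s : ↥(SS k) => φ (Sum.inl s)) := haA
        rw [Finset.mem_image] at h'
        obtain ⟨s, -, rfl⟩ := h'
        exact Finset.mem_image_of_mem _ (Finset.mem_filter.mpr ⟨Finset.mem_univ _, har⟩)
      · intro h
        rw [Finset.mem_image] at h
        obtain ⟨s, hsf, rfl⟩ := h
        exact ⟨Finset.mem_image_of_mem _ (Finset.mem_univ _), (Finset.mem_filter.mp hsf).2⟩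
    unfold BWProof.cA
    rw [himg, Finset.card_image_of_injective _ hinj2]
    exact le_of_eq (by congr!)
  have hsumR : k * 2 ^ k ≤ 3 * ∑ i ∈ Finset.Icc 1 k, (BWProof.Wside k Rset i).card := by
    have h1 : k * 2 ^ k ≤ 3 * BWProof.cA T A u w := by omega
    have := Nat.mul_le_mul_left 3 hcR
    omega
  have hsumL : k * 2 ^ k ≤ 3 * ∑ i ∈ Finset.Icc 1 k, (BWProof.Wside k Lset i).card := by
    have h1 : k * 2 ^ k ≤ 3 * BWProof.cA T A w u := by omega
    have := Nat.mul_le_mul_left 3 hcL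
    omega
  by_cases hk4 : 4 ≤ k
  · by_cases hsplit : ∀ j : Fin (k * k),
        (∃ t : ↥(PP k), (Sum.inr (j, t) : BWVertex k) ∈ Lset) ∧
        (∃ t : ↥(PP k), (Sum.inr (j, t) : BWVertex k) ∈ Rset)
    · have h1 := fun j => (hsplit j).1
      have h2 := fun j => (hsplit j).2
      choose tL htL using h1
      choose tR htR using h2
      exact Or.inl (BWProof.count_case1 Lset Rset hdisj tL tR htL htR)
    · rw [not_forall] at hsplit
      obtain ⟨j, hj⟩ := hsplit
      rw [not_and_or] at hj
      rcases hj with hj | hj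
      · rw [not_exists] at hj
        exact Or.inl (BWProof.count_case2 hk4 Lset Rset j
          (fun t => (hcover _).resolve_left (hj t)) hsumL)
      · rw [not_exists] at hj
        exact Or.inr (BWProof.count_case2 hk4 Rset Lset j
          (fun t => (hcover _).resolve_right (hj t)) hsumR)
  · -- trivial case `k ≤ 3`
    left
    have hne : ({S : Set (BWVertex k) | ∃ X ⊆ Lset,
        S = nbhdSet (BWGraph k) X ∩ Rset}).Nonempty :=
      ⟨nbhdSet (BWGraph k) ∅ ∩ Rset, ∅, by simp, rfl⟩
    have h1 : 1 ≤ ({S : Set (BWVertex k) | ∃ X ⊆ Lset,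
        S = nbhdSet (BWGraph k) X ∩ Rset}).ncard :=
      (Set.ncard_pos (Set.toFinite _)).mpr hne
    have h2 : (2 : ℝ) ^ (((k : ℝ) * ((k : ℝ) - 3)) / 6) ≤ 1 := by
      apply Real.rpow_le_one_of_one_le_of_nonpos one_le_two
      have hkR : (k : ℝ) ≤ 3 := by exact_mod_cast (by omega : k ≤ 3)
      have : (k : ℝ) * ((k : ℝ) - 3) ≤ 0 :=
        mul_nonpos_of_nonneg_of_nonpos (Nat.cast_nonneg k) (by linarith)
      linarith [this]
    calc (2 : ℝ) ^ (((k : ℝ) * ((k : ℝ) - 3)) / 6) ≤ 1 := h2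
      _ ≤ _ := by exact_mod_cast h1
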